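/- (Realizing every oscillation value) Let C be a countable atomless Boolean subalgebra of the interval algebra B. For every n > 0 there exist a, b ∈ C with a ∩ b = ∅, 0 ∉ a ∪ b, and osc(a, b) = n. -/

import Mathlib

/-!
The endpoints of a good set are intrinsic: they are exactly its jumps, the points `u` whose
membership differs from membership on a left neighbourhood of `u`. Good sets are constant on some
left neighbourhood of every point, so the jumps of a disjoint union are those of the two sets as
long as these share no jump.

In an atomless algebra a nonempty `s` contains a strictly decreasing sequence, whose differences are
infinitely many pairwise disjoint pieces, and a point is a jump of at most two of them. As `e` is
finite-to-one, some piece `p` has all its interesting numbers above any given bound, and a nonempty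
part of `s` disjoint from `p` is left over. Adding such pieces alternately to `a` and to `b` makes
`int a ∪ int b` a union of `n` consecutive blocks alternating between the two sides, and `a`, `b`
oscillate exactly at the minima of the blocks.
-/

open Set

/-- `X = [0,1) ∩ ℚ`, represented as a set of rationals. -/
def Xset : Set ℚ := {x | 0 ≤ x ∧ x < 1}

/-- `X ∪ {1}`, the possible endpoints. -/
def Eset : Set ℚ := Xset ∪ {1}

/-- `f` (restricted to `{0,…,2n-1}`) is an increasing sequence of endpoints
representing `a` as a union of half-open intervals `[f(2i), f(2i+1))`. -/
def IsGoodSeq (n : ℕ) (f : ℕ → ℚ) (a : Set ℚ) : Prop :=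
  (∀ i < 2 * n, f i ∈ Eset) ∧
  (∀ i j : ℕ, i < j → j < 2 * n → f i < f j) ∧
  (∀ x ∈ Xset, (x ∈ a ↔ ∃ i < n, f (2 * i) ≤ x ∧ x < f (2 * i + 1)))

/-- A subset of `X` is good if it is a finite union of half-open intervals. -/
def IsGood (a : Set ℚ) : Prop := a ⊆ Xset ∧ ∃ n f, IsGoodSeq n f a

/-- The set of endpoints of a good set (the image of its endpoint sequence). -/
def endpoints (a : Set ℚ) : Set ℚ :=
  {u | ∃ n f, IsGoodSeq n f a ∧ ∃ i < 2 * n, f i = u}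

/-- A function `e` is finite-to-one on `X ∪ {1}`. -/
def FinToOne (e : ℚ → ℕ) : Prop := ∀ m : ℕ, {x ∈ Eset | e x = m}.Finite

/-- `int(a) = {e(u) : u ∈ Im(seq_a)}`, the interesting numbers of `a`. -/
def intS (e : ℚ → ℕ) (a : Set ℚ) : Set ℕ := e '' endpoints a

/-- `a` and `b` oscillate at `i`: for some side `k`, `i` belongs to `int` of that
side only, and the largest `j < i` lying in the symmetric difference
`int(a) ∆ int(b)` (if any) belongs to the other side only. -/
def OscAt (e : ℚ → ℕ) (a b : Set ℚ) (i : ℕ) : Prop :=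
  ∃ k : Bool,
    (i ∈ intS e (bif k then b else a) ∧ i ∉ intS e (bif k then a else b)) ∧
    ∀ j, j < i → j ∈ symmDiff (intS e a) (intS e b) →
      (∀ j', j < j' → j' < i → j' ∉ symmDiff (intS e a) (intS e b)) →
      (j ∈ intS e (bif k then a else b) ∧ j ∉ intS e (bif k then b else a))

/-- The oscillation of `a` and `b`: the number of `i` at which they oscillate. -/
noncomputable def osc (e : ℚ → ℕ) (a b : Set ℚ) : ℕ := {i | OscAt e a b i}.ncard

/-- `C` is a Boolean subalgebra of the interval algebra of good subsets of `X`. -/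
def IsSubalg (C : Set (Set ℚ)) : Prop :=
  (∀ a ∈ C, IsGood a) ∧ ∅ ∈ C ∧ Xset ∈ C ∧
  (∀ a ∈ C, ∀ b ∈ C, a ∪ b ∈ C) ∧
  (∀ a ∈ C, ∀ b ∈ C, a ∩ b ∈ C) ∧
  (∀ a ∈ C, Xset \ a ∈ C)

/-- `C` is atomless: every nonempty member properly contains a nonempty member. -/
def IsAtomlessAlg (C : Set (Set ℚ)) : Prop :=
  ∀ a ∈ C, a ≠ ∅ → ∃ b ∈ C, b ≠ ∅ ∧ b ⊂ a

open Function

lemma Eset_subset_Icc : Eset ⊆ Icc 0 1 := by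
  rintro u (h | h)
  · exact ⟨h.1, h.2.le⟩
  · rw [mem_singleton_iff.1 h]; norm_num

def IsJump (a : Set ℚ) (u : ℚ) : Prop :=
  ∃ q < u, ∀ x ∈ Ioo q u, (x ∈ a ↔ u ∉ a)

lemma isJump_iff_of_forall_mem_iff {a : Set ℚ} {q u : ℚ} {P : Prop} (hq : q < u)
    (h : ∀ x ∈ Ioo q u, (x ∈ a ↔ P)) : IsJump a u ↔ (P ↔ u ∉ a) := by
  constructor
  · rintro ⟨q', hq', h'⟩
    obtain ⟨x, hx, hxu⟩ := exists_between (max_lt hq hq')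
    exact (h x ⟨(le_max_left _ _).trans_lt hx, hxu⟩).symm.trans
      (h' x ⟨(le_max_right _ _).trans_lt hx, hxu⟩)
  · exact fun hP => ⟨q, hq, fun x hx => (h x hx).trans hP⟩

lemma Set.Finite.exists_lt_forall_notMem_Ioo {S : Set ℚ} (hS : S.Finite) (u : ℚ) :
    ∃ q < u, ∀ v ∈ S, v ∉ Ioo q u := by
  classical
  set T := insert (u - 1) (hS.toFinset.filter (· < u))
  have hT : ∀ v ∈ T, v < u := by
    simp only [T, Finset.mem_insert, Finset.mem_filter]
    rintro v (rfl | ⟨-, hv⟩) <;> linarith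
  refine ⟨T.max' (Finset.insert_nonempty _ _), hT _ (T.max'_mem _), fun v hv hvI => ?_⟩
  have : v ∈ T := Finset.mem_insert_of_mem (Finset.mem_filter.2 ⟨hS.mem_toFinset.2 hv, hvI.2⟩)
  exact not_le.2 hvI.1 (T.le_max' _ this)

lemma endpoints_subset_Eset {a : Set ℚ} : endpoints a ⊆ Eset := by
  rintro _ ⟨n, f, hf, i, hi, rfl⟩
  exact hf.1 i hi

namespace IsGoodSeq

variable {n : ℕ} {f : ℕ → ℚ} {a : Set ℚ}

lemma lt_iff_lt (hf : IsGoodSeq n f a) {i j : ℕ} (hi : i < 2 * n) (hj : j < 2 * n) :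
    f i < f j ↔ i < j := by
  refine ⟨fun h => ?_, fun h => hf.2.1 i j h hj⟩
  by_contra hji
  rcases (not_lt.1 hji).eq_or_lt with rfl | hji
  · exact lt_irrefl _ h
  · exact lt_asymm h (hf.2.1 j i hji hi)

lemma mem_of_le_of_lt (hf : IsGoodSeq n f a) {j : ℕ} (hj : j < n) {x : ℚ}
    (h₁ : f (2 * j) ≤ x) (h₂ : x < f (2 * j + 1)) : x ∈ a :=
  (hf.2.2 x ⟨(Eset_subset_Icc (hf.1 _ (by omega))).1.trans h₁,
    h₂.trans_le (Eset_subset_Icc (hf.1 _ (by omega))).2⟩).2 ⟨j, hj, h₁, h₂⟩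

lemma exists_of_mem (hf : IsGoodSeq n f a) (ha : a ⊆ Xset) {x : ℚ} (hx : x ∈ a) :
    ∃ j < n, f (2 * j) ≤ x ∧ x < f (2 * j + 1) :=
  (hf.2.2 x (ha hx)).1 hx

lemma odd_notMem (hf : IsGoodSeq n f a) (ha : a ⊆ Xset) {j : ℕ} (hj : j < n) :
    f (2 * j + 1) ∉ a := by
  intro hmem
  obtain ⟨k, hk, h₁, h₂⟩ := hf.exists_of_mem ha hmem
  rw [← not_lt, hf.lt_iff_lt (by omega) (by omega)] at h₁
  rw [hf.lt_iff_lt (by omega) (by omega)] at h₂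
  omega

lemma isJump (hf : IsGoodSeq n f a) (ha : a ⊆ Xset) {i : ℕ} (hi : i < 2 * n) :
    IsJump a (f i) := by
  obtain ⟨j, rfl | rfl⟩ := Nat.even_or_odd' i
  · obtain ⟨q, hq, hfree⟩ :=
      ((finite_Iio (2 * n)).image f).exists_lt_forall_notMem_Ioo (f (2 * j))
    have hgap : ∀ x ∈ Ioo q (f (2 * j)), (x ∈ a ↔ False) := by
      refine fun x hx => iff_false_intro fun hxa => ?_
      obtain ⟨k, hk, h₁, h₂⟩ := hf.exists_of_mem ha hxa
      have hkj : 2 * k + 1 < 2 * j := by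
        have := (hf.lt_iff_lt (by omega) hi).1 (h₁.trans_lt hx.2)
        omega
      exact hfree _ (mem_image_of_mem f (by simp; omega))
        ⟨hx.1.trans h₂, (hf.lt_iff_lt (by omega) hi).2 hkj⟩
    rw [isJump_iff_of_forall_mem_iff hq hgap]
    simpa using hf.mem_of_le_of_lt (j := j) (by omega) le_rfl (hf.2.1 _ _ (by omega) (by omega))
  · have hfull : ∀ x ∈ Ioo (f (2 * j)) (f (2 * j + 1)), (x ∈ a ↔ True) :=
      fun x hx => iff_true_intro (hf.mem_of_le_of_lt (by omega) hx.1.le hx.2)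
    rw [isJump_iff_of_forall_mem_iff (hf.2.1 _ _ (by omega) hi) hfull]
    simpa using hf.odd_notMem ha (by omega)

lemma exists_eq_of_isJump (hf : IsGoodSeq n f a) (ha : a ⊆ Xset) {u : ℚ} (hu : IsJump a u) :
    ∃ i < 2 * n, f i = u := by
  obtain ⟨q, hq, hjump⟩ := hu
  by_cases hua : u ∈ a
  · obtain ⟨j, hj, h₁, h₂⟩ := hf.exists_of_mem ha hua
    refine ⟨2 * j, by omega, h₁.eq_of_not_lt fun hlt => ?_⟩
    obtain ⟨x, hx, hxu⟩ := exists_between (max_lt hq hlt)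
    exact (hjump x ⟨(le_max_left _ _).trans_lt hx, hxu⟩).1
      (hf.mem_of_le_of_lt hj ((le_max_right _ _).trans_lt hx).le (hxu.trans h₂)) hua
  · obtain ⟨x, hqx, hxu⟩ := exists_between hq
    have hxa : x ∈ a := (hjump x ⟨hqx, hxu⟩).2 hua
    obtain ⟨j, hj, h₁, h₂⟩ := hf.exists_of_mem ha hxa
    refine ⟨2 * j + 1, by omega, ?_⟩
    rcases lt_trichotomy (f (2 * j + 1)) u with h | h | h
    · exact absurd ((hjump _ ⟨hqx.trans h₂, h⟩).2 hua) (hf.odd_notMem ha hj)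
    · exact h
    · exact absurd (hf.mem_of_le_of_lt hj (h₁.trans hxu.le) h) hua

end IsGoodSeq

lemma endpoints_empty : endpoints (∅ : Set ℚ) = ∅ := by
  refine eq_empty_of_forall_notMem ?_
  rintro _ ⟨m, g, hg, i, hi, rfl⟩
  exact hg.mem_of_le_of_lt (j := 0) (by omega) le_rfl (hg.2.1 0 1 one_pos (by omega))

namespace IsGood

variable {a b : Set ℚ}

lemma endpoints_eq (ha : IsGood a) : endpoints a = {u | IsJump a u} := by
  ext u
  constructor
  · rintro ⟨m, g, hg, i, hi, rfl⟩
    exact hg.isJump ha.1 hi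
  · intro hu
    obtain ⟨n, f, hf⟩ := ha.2
    obtain ⟨i, hi, rfl⟩ := hf.exists_eq_of_isJump ha.1 hu
    exact ⟨n, f, hf, i, hi, rfl⟩

lemma endpoints_finite (ha : IsGood a) : (endpoints a).Finite := by
  obtain ⟨n, f, hf⟩ := ha.2
  refine ((finite_Iio (2 * n)).image f).subset fun u hu => ?_
  rw [ha.endpoints_eq] at hu
  obtain ⟨i, hi, rfl⟩ := hf.exists_eq_of_isJump ha.1 hu
  exact mem_image_of_mem f hi

lemma intS_finite (ha : IsGood a) (e : ℚ → ℕ) : (intS e a).Finite :=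
  ha.endpoints_finite.image e

lemma endpoints_nonempty (ha : IsGood a) (hne : a.Nonempty) : (endpoints a).Nonempty := by
  obtain ⟨n, f, hf⟩ := ha.2
  obtain ⟨x, hx⟩ := hne
  obtain ⟨j, hj, -⟩ := hf.exists_of_mem ha.1 hx
  exact ⟨f 0, n, f, hf, 0, by omega, rfl⟩

lemma exists_forall_mem_iff (ha : IsGood a) (u : ℚ) :
    ∃ q < u, ∃ P : Prop, ∀ x ∈ Ioo q u, (x ∈ a ↔ P) := by
  obtain ⟨n, f, hf⟩ := ha.2
  obtain ⟨q, hq, hfree⟩ := ((finite_Iio (2 * n)).image f).exists_lt_forall_notMem_Ioo u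
  refine ⟨q, hq, ∃ y ∈ Ioo q u, y ∈ a, fun x hx => ⟨fun hxa => ⟨x, hx, hxa⟩, ?_⟩⟩
  rintro ⟨y, hy, hya⟩
  obtain ⟨j, hj, h₁, h₂⟩ := hf.exists_of_mem ha.1 hya
  refine hf.mem_of_le_of_lt hj (not_lt.1 fun hlt => ?_) (not_le.1 fun hle => ?_)
  · exact hfree _ (mem_image_of_mem f (by simp; omega)) ⟨hx.1.trans hlt, h₁.trans_lt hy.2⟩
  · exact hfree _ (mem_image_of_mem f (by simp; omega)) ⟨hy.1.trans h₂, hle.trans_lt hx.2⟩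

end IsGood

lemma isJump_union_iff {a b : Set ℚ} (ha : IsGood a) (hb : IsGood b) (hab : Disjoint a b)
    {u : ℚ} (hu : ¬(IsJump a u ∧ IsJump b u)) :
    IsJump (a ∪ b) u ↔ IsJump a u ∨ IsJump b u := by
  obtain ⟨qa, hqa, P, hP⟩ := ha.exists_forall_mem_iff u
  obtain ⟨qb, hqb, Q, hQ⟩ := hb.exists_forall_mem_iff u
  have hq : max qa qb < u := max_lt hqa hqb
  have hPa : ∀ x ∈ Ioo (max qa qb) u, (x ∈ a ↔ P) :=
    fun x hx => hP x ⟨(le_max_left _ _).trans_lt hx.1, hx.2⟩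
  have hQb : ∀ x ∈ Ioo (max qa qb) u, (x ∈ b ↔ Q) :=
    fun x hx => hQ x ⟨(le_max_right _ _).trans_lt hx.1, hx.2⟩
  have hPQ : ¬(P ∧ Q) := by
    rintro ⟨hp, hq'⟩
    obtain ⟨x, hx⟩ := nonempty_Ioo.2 hq
    exact hab.notMem_of_mem_left ((hPa x hx).2 hp) ((hQb x hx).2 hq')
  have hPQab : ∀ x ∈ Ioo (max qa qb) u, (x ∈ a ∪ b ↔ P ∨ Q) :=
    fun x hx => (or_congr (hPa x hx) (hQb x hx))
  have hab_u : ¬(u ∈ a ∧ u ∈ b) := fun h => hab.notMem_of_mem_left h.1 h.2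
  rw [isJump_iff_of_forall_mem_iff hq hPa, isJump_iff_of_forall_mem_iff hq hQb] at hu ⊢
  rw [isJump_iff_of_forall_mem_iff hq hPQab, mem_union]
  tauto

lemma IsGood.endpoints_union {a b : Set ℚ} (ha : IsGood a) (hb : IsGood b) (hab' : IsGood (a ∪ b))
    (hab : Disjoint a b) (hend : Disjoint (endpoints a) (endpoints b)) :
    endpoints (a ∪ b) = endpoints a ∪ endpoints b := by
  ext u
  rw [mem_union, ha.endpoints_eq, hb.endpoints_eq, hab'.endpoints_eq] at *
  exact isJump_union_iff ha hb hab fun h => hend.notMem_of_mem_left h.1 h.2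

lemma IsGood.intS_union {e : ℚ → ℕ} {a b : Set ℚ} (ha : IsGood a) (hb : IsGood b)
    (hab' : IsGood (a ∪ b)) (hab : Disjoint a b) (hlt : ∀ x ∈ intS e a, ∀ y ∈ intS e b, x < y) :
    intS e (a ∪ b) = intS e a ∪ intS e b := by
  have hend : Disjoint (endpoints a) (endpoints b) := disjoint_left.2 fun u hu hu' =>
    lt_irrefl _ (hlt _ (mem_image_of_mem e hu) _ (mem_image_of_mem e hu'))
  rw [intS, ha.endpoints_union hb hab' hab hend, image_union]
  rfl

lemma isJump_zero {a : Set ℚ} (ha : a ⊆ Xset) (h0 : (0 : ℚ) ∈ a) : IsJump a 0 :=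
  ⟨-1, by norm_num, fun x hx => iff_of_false (fun hxa => (ha hxa).1.not_gt hx.2) (not_not.2 h0)⟩

lemma finite_setOf_isJump {ι : Type*} {s : ι → Set ℚ} (hs : Pairwise (Disjoint on s)) (u : ℚ) :
    {k | IsJump (s k) u}.Finite := by
  have hsplit : {k | IsJump (s k) u} ⊆ {k | u ∈ s k} ∪ {k | u ∉ s k ∧ IsJump (s k) u} :=
    fun k hk => (em (u ∈ s k)).imp id fun h => ⟨h, hk⟩
  refine ((Set.Subsingleton.finite ?_).union (Set.Subsingleton.finite ?_)).subset hsplit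
  · intro k hk l hl
    by_contra hkl
    exact (hs hkl).notMem_of_mem_left hk hl
  · rintro k ⟨hk, q, hq, hkq⟩ l ⟨hl, r, hr, hlr⟩
    by_contra hkl
    obtain ⟨x, hx, hxu⟩ := exists_between (max_lt hq hr)
    exact (hs hkl).notMem_of_mem_left
      ((hkq x ⟨(le_max_left _ _).trans_lt hx, hxu⟩).2 hk)
      ((hlr x ⟨(le_max_right _ _).trans_lt hx, hxu⟩).2 hl)

namespace IsSubalg

variable {C : Set (Set ℚ)}

lemma exists_strictAnti (hCat : IsAtomlessAlg C) {s : Set ℚ} (hs : s ∈ C) (hsne : s.Nonempty) :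
    ∃ t : ℕ → Set ℚ, t 0 = s ∧ (∀ k, t k ∈ C) ∧ StrictAnti t := by
  choose! sub hsubC hsubne hsubss using hCat
  have ht : ∀ k, sub^[k] s ∈ C ∧ sub^[k] s ≠ ∅ := by
    intro k
    induction k with
    | zero => exact ⟨hs, hsne.ne_empty⟩
    | succ k ih =>
      rw [Function.iterate_succ_apply']
      exact ⟨hsubC _ ih.1 ih.2, hsubne _ ih.1 ih.2⟩
  refine ⟨fun k => sub^[k] s, rfl, fun k => (ht k).1, strictAnti_nat_of_succ_lt fun k => ?_⟩
  simp only [Function.iterate_succ_apply']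
  exact hsubss _ (ht k).1 (ht k).2

lemma exists_split (hC : IsSubalg C) (hCat : IsAtomlessAlg C) {s : Set ℚ} (hs : s ∈ C)
    (hsne : s.Nonempty) {F : Set ℚ} (hF : F.Finite) :
    ∃ p ∈ C, ∃ s' ∈ C, p.Nonempty ∧ s'.Nonempty ∧ p ⊆ s ∧ s' ⊆ s ∧ Disjoint p s' ∧
      Disjoint (endpoints p) F := by
  obtain ⟨t, rfl, htC, hanti⟩ := exists_strictAnti hCat hs hsne
  set piece : ℕ → Set ℚ := fun k => t k ∩ (Xset \ t (k + 1))
  have hpieceC : ∀ k, piece k ∈ C := fun k => hC.2.2.2.2.1 _ (htC k) _ (hC.2.2.2.2.2 _ (htC _))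
  have hpiece_ne : ∀ k, (piece k).Nonempty := by
    intro k
    obtain ⟨x, hx, hx'⟩ := exists_of_ssubset (hanti (Nat.lt_succ_self k))
    exact ⟨x, hx, (hC.1 _ (htC k)).1 hx, hx'⟩
  have hpiece_t : ∀ k, Disjoint (piece k) (t (k + 1)) :=
    fun k => disjoint_left.2 fun x hx => hx.2.2
  have hdisj : Pairwise (Disjoint on piece) := by
    refine pairwise_disjoint_on piece |>.2 fun k l hkl => ?_
    exact (hpiece_t k).mono_right (inter_subset_left.trans (hanti.antitone hkl))
  obtain ⟨k, hk⟩ := (hF.biUnion fun u _ => finite_setOf_isJump hdisj u).infinite_compl.nonempty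
  refine ⟨piece k, hpieceC k, t (k + 1), htC _, hpiece_ne k, ?_, ?_, hanti.antitone (Nat.zero_le _),
    hpiece_t k, ?_⟩
  · obtain ⟨x, hx, -⟩ := hpiece_ne (k + 1)
    exact ⟨x, hx⟩
  · exact inter_subset_left.trans (hanti.antitone (Nat.zero_le _))
  · rw [(hC.1 _ (hpieceC k)).endpoints_eq]
    exact disjoint_left.2 fun u hu huF => hk (mem_biUnion huF hu)

lemma exists_split_intS_gt {e : ℚ → ℕ} (he : FinToOne e) (hC : IsSubalg C)
    (hCat : IsAtomlessAlg C) {s : Set ℚ} (hs : s ∈ C) (hsne : s.Nonempty) (N : ℕ) :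
    ∃ p ∈ C, ∃ s' ∈ C, p.Nonempty ∧ s'.Nonempty ∧ p ⊆ s ∧ s' ⊆ s ∧ Disjoint p s' ∧
      (0 : ℚ) ∉ p ∧ ∀ y ∈ intS e p, N < y := by
  -- `0` is a jump of every good set containing it, so putting it into `F` keeps it out of `p`.
  have hF : (insert 0 {u ∈ Eset | e u ≤ N}).Finite := by
    refine ((finite_le_nat N).biUnion fun j _ => he j).insert 0 |>.subset ?_
    rintro u (rfl | ⟨hu, hle⟩)
    exacts [mem_insert _ _, mem_insert_of_mem _ (mem_biUnion hle ⟨hu, rfl⟩)]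
  obtain ⟨p, hpC, s', hs'C, hpne, hs'ne, hps, hs's, hps', hpF⟩ := hC.exists_split hCat hs hsne hF
  have hpgood := hC.1 _ hpC
  refine ⟨p, hpC, s', hs'C, hpne, hs'ne, hps, hs's, hps', fun h0 => ?_, ?_⟩
  · refine hpF.notMem_of_mem_left ?_ (mem_insert 0 _)
    rw [hpgood.endpoints_eq]
    exact isJump_zero hpgood.1 h0
  · rintro _ ⟨u, hu, rfl⟩
    exact not_le.1 fun hle =>
      hpF.notMem_of_mem_left hu (mem_insert_of_mem _ ⟨endpoints_subset_Eset hu, hle⟩)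

end IsSubalg

section Blocks

variable {e : ℚ → ℕ} {n : ℕ} {D : ℕ → Set ℕ} {c : Bool → Set ℚ}

variable (hlt : ∀ i j, i < j → j < n → ∀ x ∈ D i, ∀ y ∈ D j, x < y)
include hlt

lemma eq_of_mem_block {i j x : ℕ} (hi : i < n) (hj : j < n) (hxi : x ∈ D i) (hxj : x ∈ D j) :
    i = j := by
  by_contra h
  rcases Nat.lt_or_gt_of_ne h with h | h
  · exact lt_irrefl x (hlt i j h hj x hxi x hxj)
  · exact lt_irrefl x (hlt j i h hi x hxj x hxi)

variable (hc : ∀ k t, t ∈ intS e (c k) ↔ ∃ i < n, i.bodd = k ∧ t ∈ D i)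
include hc

lemma mem_intS_iff_bodd_eq {i x : ℕ} (hi : i < n) (hx : x ∈ D i) (k : Bool) :
    x ∈ intS e (c k) ↔ i.bodd = k := by
  rw [hc]
  exact ⟨fun ⟨j, hj, hjk, hxj⟩ => eq_of_mem_block hlt hi hj hx hxj ▸ hjk,
    fun h => ⟨i, hi, h, hx⟩⟩

lemma mem_symmDiff_intS_iff (x : ℕ) :
    x ∈ symmDiff (intS e (c false)) (intS e (c true)) ↔ ∃ i < n, x ∈ D i := by
  rw [mem_symmDiff]
  constructor
  · rintro (⟨h, -⟩ | ⟨h, -⟩) <;> obtain ⟨i, hi, -, hx⟩ := (hc _ x).1 h <;> exact ⟨i, hi, hx⟩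
  · rintro ⟨i, hi, hx⟩
    simp only [mem_intS_iff_bodd_eq hlt hc hi hx]
    cases i.bodd <;> simp

variable (hne : ∀ i < n, (D i).Nonempty)
include hne

lemma oscAt_iff_exists_sInf_eq (t : ℕ) :
    OscAt e (c false) (c true) t ↔ ∃ i < n, sInf (D i) = t := by
  have hcond : ∀ k, (bif k then c true else c false) = c k ∧
      (bif k then c false else c true) = c !k := fun k => by cases k <;> exact ⟨rfl, rfl⟩
  simp only [OscAt, hcond, mem_symmDiff_intS_iff hlt hc]
  constructor
  · rintro ⟨k, ⟨htk, -⟩, hpred⟩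
    obtain ⟨i, hi, rfl, hti⟩ := (hc k t).1 htk
    refine ⟨i, hi, (Nat.sInf_le hti).eq_of_not_lt fun hmin => ?_⟩
    -- otherwise the predecessor of `t` lies in the same block, hence on the same side
    obtain ⟨j, ⟨hjD, hjt⟩, hjmax⟩ := (D i ∩ Iio t).exists_max_image id
      ((finite_Iio t).subset inter_subset_right) ⟨_, Nat.sInf_mem (hne i hi), hmin⟩
    refine (hpred j hjt ⟨i, hi, hjD⟩ ?_).2 ((mem_intS_iff_bodd_eq hlt hc hi hjD _).2 rfl)
    rintro j' hjj' hj't ⟨i', hi', hj'D⟩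
    rcases lt_trichotomy i' i with h | rfl | h
    · exact (hlt i' i h hi j' hj'D j hjD).not_gt hjj'
    · exact (hjmax j' ⟨hj'D, hj't⟩).not_gt hjj'
    · exact (hlt i i' h hi' t hti j' hj'D).not_gt hj't
  · rintro ⟨i, hi, rfl⟩
    have hmin := Nat.sInf_mem (hne i hi)
    have hside := mem_intS_iff_bodd_eq hlt hc hi hmin
    refine ⟨i.bodd, ⟨(hside _).2 rfl, by simp [hside]⟩, ?_⟩
    rintro j hjt ⟨i', hi', hjD⟩ hgap
    obtain rfl : i' + 1 = i := by
      rcases lt_trichotomy (i' + 1) i with h | h | h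
      · have hnext := Nat.sInf_mem (hne _ (h.trans hi))
        exact absurd ⟨i' + 1, h.trans hi, hnext⟩ (hgap _ (hlt _ _ i'.lt_succ_self (h.trans hi)
          _ hjD _ hnext) (hlt _ _ h hi _ hnext _ hmin))
      · exact h
      · rcases (Nat.lt_succ_iff.1 h).eq_or_lt with rfl | h
        · exact absurd (Nat.sInf_le hjD) hjt.not_ge
        · exact absurd (hlt _ _ h hi' _ hmin _ hjD) hjt.not_gt
    simp [mem_intS_iff_bodd_eq hlt hc hi' hjD, Nat.bodd_succ]

lemma osc_eq_of_blocks : osc e (c false) (c true) = n := by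
  have hinj : InjOn (fun i => sInf (D i)) (Iio n) := StrictMonoOn.injOn fun i hi j hj hij =>
    hlt i j hij hj _ (Nat.sInf_mem (hne i hi)) _ (Nat.sInf_mem (hne j hj))
  have hosc : {t | OscAt e (c false) (c true) t} = (fun i => sInf (D i)) '' Iio n := by
    ext t
    simp [oscAt_iff_exists_sInf_eq hlt hc hne]
  rw [osc, hosc, hinj.ncard_image, ← Finset.coe_range, ncard_coe_finset, Finset.card_range]

end Blocks

lemma exists_lt_succ_mem_update_iff {α : Type*} {n : ℕ} {D : ℕ → Set α} {B : Set α}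
    {P : ℕ → Prop} {t : α} :
    (∃ i < n + 1, P i ∧ t ∈ update D n B i) ↔ (∃ i < n, P i ∧ t ∈ D i) ∨ (P n ∧ t ∈ B) := by
  constructor
  · rintro ⟨i, hi, hP, ht⟩
    rcases (Nat.lt_succ_iff.1 hi).eq_or_lt with rfl | hi
    · exact Or.inr ⟨hP, by simpa using ht⟩
    · exact Or.inl ⟨i, hi, hP, by simpa [hi.ne] using ht⟩
  · rintro (⟨i, hi, hP, ht⟩ | ⟨hP, ht⟩)
    · exact ⟨i, by omega, hP, by simpa [hi.ne] using ht⟩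
    · exact ⟨n, by omega, hP, by simpa using ht⟩

/-- The sets `a = c false` and `b = c true` after `n` steps: `D i` holds the interesting numbers
contributed by the `i`-th piece, and `s` is what remains for the later pieces. -/
structure OscStage (e : ℚ → ℕ) (C : Set (Set ℚ)) (n : ℕ) (c : Bool → Set ℚ) (s : Set ℚ)
    (D : ℕ → Set ℕ) : Prop where
  mem : ∀ k, c k ∈ C
  reservoir_mem : s ∈ C
  reservoir_nonempty : s.Nonempty
  disjoint : Disjoint (c false) (c true)
  disjoint_reservoir : ∀ k, Disjoint (c k) s
  zero_notMem : ∀ k, (0 : ℚ) ∉ c k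
  block_nonempty : ∀ i < n, (D i).Nonempty
  block_lt : ∀ i j, i < j → j < n → ∀ x ∈ D i, ∀ y ∈ D j, x < y
  mem_intS : ∀ k t, t ∈ intS e (c k) ↔ ∃ i < n, i.bodd = k ∧ t ∈ D i

namespace OscStage

variable {e : ℚ → ℕ} {C : Set (Set ℚ)}

lemma zero (hC : IsSubalg C) : OscStage e C 0 (fun _ => ∅) Xset (fun _ => ∅) where
  mem _ := hC.2.1
  reservoir_mem := hC.2.2.1
  reservoir_nonempty := ⟨0, le_rfl, one_pos⟩
  disjoint := empty_disjoint _
  disjoint_reservoir _ := empty_disjoint _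
  zero_notMem _ := notMem_empty 0
  block_nonempty := by simp
  block_lt := by omega
  mem_intS := by simp [intS, endpoints_empty]

lemma exists_piece (he : FinToOne e) (hC : IsSubalg C) (hCat : IsAtomlessAlg C) {n : ℕ}
    {c : Bool → Set ℚ} {s : Set ℚ} {D : ℕ → Set ℕ} (h : OscStage e C n c s D) :
    ∃ p ∈ C, ∃ s' ∈ C, p.Nonempty ∧ s'.Nonempty ∧ p ⊆ s ∧ s' ⊆ s ∧ Disjoint p s' ∧
      (0 : ℚ) ∉ p ∧ ∀ k, ∀ x ∈ intS e (c k), ∀ y ∈ intS e p, x < y := by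
  obtain ⟨N, hN⟩ := ((hC.1 _ (h.mem false)).intS_finite e).union
    ((hC.1 _ (h.mem true)).intS_finite e) |>.bddAbove
  obtain ⟨p, hpC, s', hs'C, hpne, hs'ne, hps, hs's, hps', h0p, hpN⟩ :=
    hC.exists_split_intS_gt he hCat h.reservoir_mem h.reservoir_nonempty N
  refine ⟨p, hpC, s', hs'C, hpne, hs'ne, hps, hs's, hps', h0p, fun k x hx y hy => ?_⟩
  exact (hN (by cases k <;> simp [hx])).trans_lt (hpN y hy)

lemma succ (he : FinToOne e) (hC : IsSubalg C) (hCat : IsAtomlessAlg C) {n : ℕ}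
    {c : Bool → Set ℚ} {s : Set ℚ} {D : ℕ → Set ℕ} (h : OscStage e C n c s D) :
    ∃ c' s' D', OscStage e C (n + 1) c' s' D' := by
  obtain ⟨p, hpC, s', hs'C, hpne, hs'ne, hps, hs's, hps', h0p, hcp_lt⟩ :=
    h.exists_piece he hC hCat
  have hcp : ∀ k, Disjoint (c k) p := fun k => (h.disjoint_reservoir k).mono_right hps
  have hunion : ∀ k, intS e (c k ∪ p) = intS e (c k) ∪ intS e p := fun k =>
    (hC.1 _ (h.mem k)).intS_union (hC.1 _ hpC) (hC.1 _ (hC.2.2.2.1 _ (h.mem k) _ hpC)) (hcp k)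
      (hcp_lt k)
  refine ⟨fun k => if k = n.bodd then c k ∪ p else c k, s', update D n (intS e p), ?_⟩
  constructor
  · intro k
    split_ifs
    exacts [hC.2.2.2.1 _ (h.mem k) _ hpC, h.mem k]
  · exact hs'C
  · exact hs'ne
  · cases n.bodd <;> simp only [Bool.false_eq_true, if_true, if_false]
    exacts [disjoint_union_left.2 ⟨h.disjoint, (hcp true).symm⟩,
      disjoint_union_right.2 ⟨h.disjoint, hcp false⟩]
  · intro k
    split_ifs
    exacts [disjoint_union_left.2 ⟨(h.disjoint_reservoir k).mono_right hs's, hps'⟩,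
      (h.disjoint_reservoir k).mono_right hs's]
  · intro k
    split_ifs
    exacts [fun h0 => h0.elim (h.zero_notMem k) h0p, h.zero_notMem k]
  · intro i hi
    rcases (Nat.lt_succ_iff.1 hi).eq_or_lt with rfl | hi
    · rw [update_self]
      exact ((hC.1 _ hpC).endpoints_nonempty hpne).image e
    · simpa [hi.ne] using h.block_nonempty i hi
  · intro i j hij hj x hx y hy
    rw [update_of_ne (by omega)] at hx
    rcases (Nat.lt_succ_iff.1 hj).eq_or_lt with rfl | hj
    · rw [update_self] at hy
      exact hcp_lt _ x ((h.mem_intS _ x).2 ⟨i, hij, rfl, hx⟩) y hy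
    · rw [update_of_ne hj.ne] at hy
      exact h.block_lt i j hij hj x hx y hy
  · intro k t
    rw [exists_lt_succ_mem_update_iff, ← h.mem_intS]
    split_ifs with hk
    · rw [hunion, mem_union, hk]
      simp
    · simp [Ne.symm hk]

end OscStage

lemma exists_oscStage {e : ℚ → ℕ} (he : FinToOne e) {C : Set (Set ℚ)} (hC : IsSubalg C)
    (hCat : IsAtomlessAlg C) (n : ℕ) : ∃ c s D, OscStage e C n c s D := by
  induction n with
  | zero => exact ⟨_, _, _, OscStage.zero hC⟩
  | succ n ih =>
    obtain ⟨c, s, D, h⟩ := ih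
    exact h.succ he hC hCat

theorem osc_realized_general (e : ℚ → ℕ) (he : FinToOne e)
    (C : Set (Set ℚ)) (hC : IsSubalg C) (hCat : IsAtomlessAlg C)
    (n : ℕ) :
    ∃ a ∈ C, ∃ b ∈ C, a ∩ b = ∅ ∧ (0 : ℚ) ∉ a ∪ b ∧ osc e a b = n := by
  obtain ⟨c, s, D, h⟩ := exists_oscStage he hC hCat n
  refine ⟨c false, h.mem false, c true, h.mem true, disjoint_iff_inter_eq_empty.1 h.disjoint,
    fun h0 => h0.elim (h.zero_notMem false) (h.zero_notMem true), ?_⟩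
  exact osc_eq_of_blocks h.block_lt h.mem_intS h.block_nonempty

/-- every positive oscillation value is realized by a disjoint
pair avoiding `0` inside any countable atomless subalgebra. -/
theorem osc_realized (e : ℚ → ℕ) (he : FinToOne e)
    (C : Set (Set ℚ)) (hC : IsSubalg C) (hCat : IsAtomlessAlg C)
    (hCc : C.Countable) (n : ℕ) (hn : 0 < n) :
    ∃ a ∈ C, ∃ b ∈ C, a ∩ b = ∅ ∧ (0 : ℚ) ∉ a ∪ b ∧ osc e a b = n :=
  osc_realized_general e he C hC hCat n
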